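/- Let Q : [0,∞) → [0,∞) be nondecreasing and concave with Q(0) = 0. For 0 < u < v define Q(u,v) = (Q(u) + Q(v) − Q(v−u))/2. Then Q(u)Q(v) − Q(u,v)² ≥ (1/2) Q(v−u) Q(u). -/

import Mathlib

open Set

/-
With a = Q u, b = Q v, c = Q (v - u) the claim is the polynomial inequality
4 (a b - ((a + b - c) / 2)²) - 2 a c = 2 c (b - c) + c² - (b - a)² ≥ 0.
Monotonicity gives 0 ≤ c ≤ b and a ≤ b, and concavity with Q 0 = 0 gives
subadditivity b ≤ a + c, so that |b - a| ≤ c.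
-/

theorem ConcaveOn.mul_le_map_smul {E : Type*} [AddCommGroup E] [Module ℝ E] {s : Set E}
    {f : E → ℝ} (hf : ConcaveOn ℝ s f) (h0s : 0 ∈ s) (hf0 : 0 ≤ f 0) {z : E} (hz : z ∈ s)
    {t : ℝ} (ht0 : 0 ≤ t) (ht1 : t ≤ 1) : t * f z ≤ f (t • z) := by
  have key := hf.2 h0s hz (sub_nonneg.2 ht1) ht0 (sub_add_cancel 1 t)
  simp only [smul_zero, zero_add, smul_eq_mul] at key
  nlinarith [mul_nonneg (sub_nonneg.2 ht1) hf0]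

theorem ConcaveOn.map_add_le {f : ℝ → ℝ} (hf : ConcaveOn ℝ (Ici 0) f) (hf0 : 0 ≤ f 0)
    {x y : ℝ} (hx : 0 ≤ x) (hy : 0 ≤ y) : f (x + y) ≤ f x + f y := by
  rcases (add_nonneg hx hy).eq_or_lt with hs | hs
  · obtain rfl : x = 0 := by linarith
    obtain rfl : y = 0 := by linarith
    simpa using hf0
  have hxs : x / (x + y) * (x + y) = x := div_mul_cancel₀ x hs.ne'
  have hys : y / (x + y) * (x + y) = y := div_mul_cancel₀ y hs.ne'
  have hfx := hf.mul_le_map_smul self_mem_Ici hf0 hs.le (t := x / (x + y)) (by positivity)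
    (div_le_one_of_le₀ (by linarith) hs.le)
  have hfy := hf.mul_le_map_smul self_mem_Ici hf0 hs.le (t := y / (x + y)) (by positivity)
    (div_le_one_of_le₀ (by linarith) hs.le)
  rw [smul_eq_mul, hxs] at hfx
  rw [smul_eq_mul, hys] at hfy
  calc f (x + y) = (x / (x + y) + y / (x + y)) * f (x + y) := by
        rw [← add_div, div_self hs.ne', one_mul]
    _ ≤ f x + f y := by linarith

theorem half_mul_le_mul_sub_sq {a b c : ℝ} (hc : 0 ≤ c) (hcb : c ≤ b) (hab : a ≤ b)
    (hba : b ≤ a + c) : 1 / 2 * c * a ≤ a * b - ((a + b - c) / 2) ^ 2 := by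
  nlinarith [mul_nonneg hc (sub_nonneg.2 hcb),
    mul_nonneg (sub_nonneg.2 hba) (add_nonneg hc (sub_nonneg.2 hab))]

theorem stationary_coercivity_general (Q : ℝ → ℝ)
    (hmono : MonotoneOn Q (Ici (0 : ℝ)))
    (hconc : ConcaveOn ℝ (Ici (0 : ℝ)) Q)
    (hQ0 : Q 0 = 0) :
    ∀ u v : ℝ, 0 < u → u < v →
      (1 / 2) * Q (v - u) * Q u ≤
        Q u * Q v - ((Q u + Q v - Q (v - u)) / 2) ^ 2 := by
  intro u v hu huv
  have hvu : (0 : ℝ) ≤ v - u := by linarith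
  have hv : (0 : ℝ) ≤ v := by linarith
  apply half_mul_le_mul_sub_sq
  · exact hQ0 ▸ hmono self_mem_Ici hvu hvu
  · exact hmono hvu hv (by linarith)
  · exact hmono hu.le hv huv.le
  · simpa using hconc.map_add_le hQ0.ge hu.le hvu

theorem stationary_coercivity (Q : ℝ → ℝ)
    (hmono : MonotoneOn Q (Ici (0 : ℝ)))
    (hconc : ConcaveOn ℝ (Ici (0 : ℝ)) Q)
    (hQ0 : Q 0 = 0)
    (hnonneg : ∀ x ∈ Ici (0 : ℝ), 0 ≤ Q x) :
    ∀ u v : ℝ, 0 < u → u < v →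
      (1 / 2) * Q (v - u) * Q u ≤
        Q u * Q v - ((Q u + Q v - Q (v - u)) / 2) ^ 2 :=
  stationary_coercivity_general Q hmono hconc hQ0
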